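/- arXiv:1510.03159 — 7 statements merged into one kernel-verified Lean document; each statement's English description precedes it below -/
import Mathlib

section
/- For all natural numbers n, the sum over k from 0 to n of ((-1)^k / 2^k) * L_{k+1} equals ((-1)^n / 2^n) * F_{n+1}, as an identity of rational numbers. -/
def lucas : ℕ → ℕ
  | 0 => 2
  | 1 => 1
  | n + 2 => lucas (n + 1) + lucas n

lemma lucas_eq : ∀ n, lucas (n + 1) = Nat.fib (n + 2) + Nat.fib n
  | 0 => by decide
  | 1 => by decide
  | n + 2 => by
      rw [show n + 2 + 1 = n + 3 from rfl, show lucas (n+3) = lucas (n+2) + lucas (n+1) from rfl,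
        lucas_eq (n+1), lucas_eq n, Nat.fib_add_two (n := n+2), Nat.fib_add_two (n := n)]
      ring

theorem martinjak (n : ℕ) :
    ∑ k ∈ Finset.range (n + 1), ((-1 : ℚ) ^ k / 2 ^ k) * (lucas (k + 1) : ℚ) =
      ((-1 : ℚ) ^ n / 2 ^ n) * (Nat.fib (n + 1) : ℚ) := by
  induction n with
  | zero => simp [lucas]
  | succ n ih =>
      rw [Finset.sum_range_succ, ih, lucas_eq (n+1), Nat.fib_add_two (n := n+1)]
      push_cast
      ring
end

section
/- For every element t of a commutative ring and every natural number n, the sum over k from 0 to n of t^k * (L_k + (t - 2) * F_{k+1}) equals t^{n+1} * F_{n+1}, where F and L denote the images in the ring of the Fibonacci and Lucas numbers. -/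
lemma lucas_fib : ∀ n, lucas n + Nat.fib n = 2 * Nat.fib (n + 1)
  | 0 => by simp [lucas]
  | 1 => by simp [lucas]
  | n + 2 => by
    have h1 := lucas_fib (n + 1)
    have h2 := lucas_fib n
    have h3 := Nat.fib_add_two (n := n)
    have h4 := Nat.fib_add_two (n := n + 1)
    have h5 : Nat.fib (n + 2 + 1) = Nat.fib (n + 1 + 2) := rfl
    simp only [lucas]
    omega

theorem gb_sury {R : Type*} [CommRing R] (t : R) (n : ℕ) :
    ∑ k ∈ Finset.range (n + 1),
        t ^ k * ((lucas k : R) + (t - 2) * (Nat.fib (k + 1) : R)) =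
      t ^ (n + 1) * (Nat.fib (n + 1) : R) := by
  induction n with
  | zero => simp [lucas]
  | succ n ih =>
    rw [Finset.sum_range_succ, ih]
    have key := congrArg (fun m : ℕ => (m : R)) (lucas_fib (n + 1))
    push_cast at key
    have := Nat.fib_add_two (n := n)
    have hf : (Nat.fib (n + 2) : R) = Nat.fib (n + 1) + Nat.fib n := by
      rw [this]; push_cast; ring
    linear_combination (t ^ (n + 1)) * key
end

section
/- Euler's Telescoping Lemma: Let u and v be sequences in a field with v_k nonzero for all k, and define w_k = u_k - v_k. Then for all n ≥ 1, the sum over k from 1 to n of w_k * (u_1 * ... * u_{k-1}) / (v_1 * ... * v_k) equals (u_1 * ... * u_n) / (v_1 * ... * v_n) - 1, where the empty product is 1. -/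
/-! Writing `r k = (u₁ ⋯ u_k) / (v₁ ⋯ v_k)`, the `k`-th summand is `r k - r (k - 1)`,
so the sum telescopes to `r n - r 0 = r n - 1`. -/

open Finset

theorem Finset.sum_Icc_one_sub_pred {M : Type*} [AddCommGroup M] (f : ℕ → M) (n : ℕ) :
    ∑ k ∈ Icc 1 n, (f k - f (k - 1)) = f n - f 0 := by
  induction n with
  | zero => simp
  | succ n ih =>
    rw [sum_Icc_succ_top (by omega), ih, Nat.add_sub_cancel]
    abel

theorem sub_mul_prod_Icc_div_prod_Icc_succ {F : Type*} [Field F] (u v : ℕ → F) {k : ℕ}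
    (hV : ∏ i ∈ Icc 1 k, v i ≠ 0) (hv : v (k + 1) ≠ 0) :
    (u (k + 1) - v (k + 1)) * (∏ i ∈ Icc 1 k, u i) / ∏ i ∈ Icc 1 (k + 1), v i =
      (∏ i ∈ Icc 1 (k + 1), u i) / (∏ i ∈ Icc 1 (k + 1), v i) -
        (∏ i ∈ Icc 1 k, u i) / ∏ i ∈ Icc 1 k, v i := by
  rw [prod_Icc_succ_top (by omega), prod_Icc_succ_top (by omega)]
  field_simp

theorem euler_telescoping_general {F : Type*} [Field F] (u v : ℕ → F)
    (hv : ∀ k, v k ≠ 0) (n : ℕ) :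
    ∑ k ∈ Finset.Icc 1 n,
        (u k - v k) * (∏ i ∈ Finset.Icc 1 (k - 1), u i) / (∏ i ∈ Finset.Icc 1 k, v i) =
      (∏ i ∈ Finset.Icc 1 n, u i) / (∏ i ∈ Finset.Icc 1 n, v i) - 1 := by
  let r k := (∏ i ∈ Icc 1 k, u i) / ∏ i ∈ Icc 1 k, v i
  have summand_eq : ∀ k ∈ Icc 1 n,
      (u k - v k) * (∏ i ∈ Icc 1 (k - 1), u i) / (∏ i ∈ Icc 1 k, v i) = r k - r (k - 1) := by
    intro k hk
    obtain ⟨j, rfl⟩ : ∃ j, k = j + 1 := ⟨k - 1, by grind⟩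
    exact sub_mul_prod_Icc_div_prod_Icc_succ u v (prod_ne_zero_iff.mpr fun i _ ↦ hv i) (hv _)
  rw [sum_congr rfl summand_eq, sum_Icc_one_sub_pred]
  simp [r]

theorem euler_telescoping {F : Type*} [Field F] (u v : ℕ → F)
    (hv : ∀ k, v k ≠ 0) (n : ℕ) (hn : 1 ≤ n) :
    ∑ k ∈ Finset.Icc 1 n,
        (u k - v k) * (∏ i ∈ Finset.Icc 1 (k - 1), u i) / (∏ i ∈ Finset.Icc 1 k, v i) =
      (∏ i ∈ Finset.Icc 1 n, u i) / (∏ i ∈ Finset.Icc 1 n, v i) - 1 :=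
  euler_telescoping_general u v hv n
end

section
/- Let a, b be sequences in a field with all a_k and b_k nonzero, and let x be a sequence satisfying x_{n+2} = a_n * x_{n+1} + b_n * x_n for all n ≥ 0, with x_1 ≠ 0. Assume t is an element of the field such that t * x_{k+1} ≠ 0 for relevant k (so denominators are nonzero). Then for all n ≥ 1: the sum over k from 1 to n of (t^{k-1} / (a_0 * a_1 * ... * a_{k-1})) * (b_{k-1} * x_{k-1} + (t-1) * x_{k+1}) / x_1 equals (t^n / (a_0 * ... * a_{n-1})) * x_{n+1} / x_1 - 1. -/
/-!
With `c k = t ^ k / (a 0 ⋯ a (k - 1)) * x (k + 1)`, the recurrence at index `k` rewrites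
`a k * x (k + 1)` as `x (k + 2) - b k * x k`, which makes the `(k + 1)`-st summand equal to
`(c (k + 1) - c k) / x 1`. The sum telescopes to `(c n - c 0) / x 1`, and `c 0 = x 1`.
-/

open Finset

theorem sum_Icc_one_eq_sum_range_succ {M : Type*} [AddCommMonoid M] (f : ℕ → M) (n : ℕ) :
    ∑ k ∈ Icc 1 n, f k = ∑ k ∈ range n, f (k + 1) := by
  rw [← Ico_add_one_right_eq_Icc, sum_Ico_eq_sum_range, Nat.add_sub_cancel]
  simp only [add_comm 1]

theorem recurrence_summand_eq_sub {F : Type*} [Field F] {a b x : ℕ → F} (t : F) {k : ℕ}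
    (hak : a k ≠ 0) (hrec : x (k + 2) = a k * x (k + 1) + b k * x k) :
    (t ^ k / ∏ i ∈ range (k + 1), a i) * (b k * x k + (t - 1) * x (k + 2)) =
      (t ^ (k + 1) / ∏ i ∈ range (k + 1), a i) * x (k + 2) -
        (t ^ k / ∏ i ∈ range k, a i) * x (k + 1) := by
  have hsummand : b k * x k + (t - 1) * x (k + 2) = t * x (k + 2) - a k * x (k + 1) := by
    linear_combination -hrec
  rw [hsummand, prod_range_succ, pow_succ]
  field_simp

theorem sury_gen_general {F : Type*} [Field F] (a b x : ℕ → F) (t : F)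
    (ha : ∀ k, a k ≠ 0) (hx1 : x 1 ≠ 0)
    (hrec : ∀ n, x (n + 2) = a n * x (n + 1) + b n * x n)
    (n : ℕ) :
    ∑ k ∈ Finset.Icc 1 n,
        (t ^ (k - 1) / ∏ i ∈ Finset.range k, a i) *
          ((b (k - 1) * x (k - 1) + (t - 1) * x (k + 1)) / x 1) =
      (t ^ n / ∏ i ∈ Finset.range n, a i) * (x (n + 1) / x 1) - 1 := by
  rw [sum_Icc_one_eq_sum_range_succ]
  simp only [Nat.add_sub_cancel, mul_div_assoc', ← sum_div]
  rw [sum_congr rfl fun k _ => recurrence_summand_eq_sub t (ha k) (hrec k),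
    sum_range_sub (fun k => (t ^ k / ∏ i ∈ range k, a i) * x (k + 1))]
  rw [pow_zero, prod_range_zero, div_one, one_mul, zero_add, sub_div, div_self hx1]

theorem sury_gen {F : Type*} [Field F] (a b x : ℕ → F) (t : F)
    (ha : ∀ k, a k ≠ 0) (hb : ∀ k, b k ≠ 0) (hx1 : x 1 ≠ 0)
    (hrec : ∀ n, x (n + 2) = a n * x (n + 1) + b n * x n)
    (ht : ∀ k, t * x (k + 1) ≠ 0) (n : ℕ) (hn : 1 ≤ n) :
    ∑ k ∈ Finset.Icc 1 n,
        (t ^ (k - 1) / ∏ i ∈ Finset.range k, a i) *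
          ((b (k - 1) * x (k - 1) + (t - 1) * x (k + 1)) / x 1) =
      (t ^ n / ∏ i ∈ Finset.range n, a i) * (x (n + 1) / x 1) - 1 :=
  sury_gen_general a b x t ha hx1 hrec n
end

section
/- Let a, b be sequences in a field with all a_k and b_k nonzero, and let x satisfy x_{n+2} = a_n * x_{n+1} + b_n * x_n for all n ≥ 0, with x_1 ≠ 0 and t a nonzero field element (with all denominators nonzero). Then for all n ≥ 1: the sum over k from 1 to n of ((-1)^k / t^k) * (a_1 * ... * a_{k-1}) / (b_1 * ... * b_k) * (x_{k+2} + (t-1) * b_k * x_k) / x_1 equals ((-1)^n / t^n) * (a_1 * ... * a_n) / (b_1 * ... * b_n) * x_{n+1} / x_1 - 1. -/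
private lemma step_aux {F : Type*} [Field F] (S T P Q A B u v w t : F)
    (hT : T ≠ 0) (hQ : Q ≠ 0) (hB : B ≠ 0) (hw : w ≠ 0) (ht : t ≠ 0) :
    S / T * (P / Q) * (u / w) - 1 +
      S * -1 / (T * t) * (P / (Q * B)) * ((A * v + B * u + (t - 1) * B * u) / w) =
    S * -1 / (T * t) * (P * A / (Q * B)) * (v / w) - 1 := by
  have h1 : T * t * (Q * B) * w ≠ 0 := by simp [hT, hQ, hB, hw, ht]
  apply mul_left_cancel₀ h1
  field_simp
  ring

theorem martinjak_gen {F : Type*} [Field F] (a b x : ℕ → F) (t : F)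
    (ha : ∀ k, a k ≠ 0) (hb : ∀ k, b k ≠ 0) (hx1 : x 1 ≠ 0) (ht : t ≠ 0)
    (hrec : ∀ n, x (n + 2) = a n * x (n + 1) + b n * x n)
    (n : ℕ) (hn : 1 ≤ n) :
    ∑ k ∈ Finset.Icc 1 n,
        ((-1 : F) ^ k / t ^ k) *
          ((∏ i ∈ Finset.Icc 1 (k - 1), a i) / ∏ i ∈ Finset.Icc 1 k, b i) *
          ((x (k + 2) + (t - 1) * b k * x k) / x 1) =
      ((-1 : F) ^ n / t ^ n) *
        ((∏ i ∈ Finset.Icc 1 n, a i) / ∏ i ∈ Finset.Icc 1 n, b i) *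
        (x (n + 1) / x 1) - 1 := by
  induction n, hn using Nat.le_induction with
  | base =>
      simp only [Finset.Icc_self, Finset.sum_singleton, Finset.prod_singleton,
        show (1:ℕ) - 1 = 0 from rfl, show Finset.Icc 1 0 = (∅ : Finset ℕ) from rfl,
        Finset.prod_empty, hrec 1]
      have hb1 := hb 1
      field_simp
      ring
  | succ n hn ih =>
      rw [Finset.sum_Icc_succ_top (by omega : 1 ≤ n + 1), ih,
        Finset.prod_Icc_succ_top (f := b) (by omega : 1 ≤ n + 1),
        Finset.prod_Icc_succ_top (f := a) (by omega : 1 ≤ n + 1),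
        show n + 1 - 1 = n from rfl, hrec (n + 1)]
      have hpb : (∏ i ∈ Finset.Icc 1 n, b i) ≠ 0 :=
        Finset.prod_ne_zero_iff.mpr fun i _ => hb i
      have hpa : (∏ i ∈ Finset.Icc 1 n, a i) ≠ 0 :=
        Finset.prod_ne_zero_iff.mpr fun i _ => ha i
      have hbn := hb (n + 1)
      have htn : t ^ n ≠ 0 := pow_ne_zero _ ht
      rw [pow_succ (-1 : F), pow_succ t]
      exact step_aux _ _ _ _ _ _ _ _ _ _ htn hpb hbn hx1 ht
end

section
/- For every element t of a commutative ring and every natural number n, 1 + the sum over k from 0 to n of t^k * (L_{k-1} + (t-1) * L_{k+1}) equals t^{n+1} * L_{n+1}, where L_{-1} is taken to be 0 and L denotes the Lucas numbers. -/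
theorem lucas_sury {R : Type*} [CommRing R] (t : R) (n : ℕ) :
    1 + ∑ k ∈ Finset.range (n + 1),
        t ^ k * ((if k = 0 then 0 else (lucas (k - 1) : R)) + (t - 1) * (lucas (k + 1) : R)) =
      t ^ (n + 1) * (lucas (n + 1) : R) := by
  induction n with
  | zero => simp [lucas]
  | succ n ih =>
    rw [Finset.sum_range_succ, ← add_assoc, ih]
    have h : (lucas (n + 1 + 1) : R) = lucas (n + 1) + lucas n := by
      norm_cast
    rw [if_neg (Nat.succ_ne_zero n)]
    simp only [Nat.add_sub_cancel, h]
    ring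
end

section
/- For every nonzero rational number t and every natural number n, 1 + the sum over k from 1 to n of ((-1)^k / t^k) * (L_{k+2} + (t-1) * L_k) equals ((-1)^n / t^n) * L_{n+1}. -/
theorem lucas_martinjak (t : ℚ) (ht : t ≠ 0) (n : ℕ) :
    1 + ∑ k ∈ Finset.Icc 1 n,
        ((-1 : ℚ) ^ k / t ^ k) * ((lucas (k + 2) : ℚ) + (t - 1) * (lucas k : ℚ)) =
      ((-1 : ℚ) ^ n / t ^ n) * (lucas (n + 1) : ℚ) := by
  induction n with
  | zero => simp [lucas]
  | succ n ih =>
    rw [Finset.sum_Icc_succ_top (by omega), ← add_assoc, ih]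
    have h3 : lucas (n + 3) = lucas (n + 2) + lucas (n + 1) := rfl
    have h2 : lucas (n + 2) = lucas (n + 1) + lucas n := rfl
    show _ + _ * ((lucas (n+1+2) : ℚ) + _) = _
    rw [show n+1+2 = n+3 from rfl, h3, h2]
    push_cast
    field_simp
    ring
end
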